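/- arXiv:2201.13135 — 5 statements merged into one kernel-verified Lean document; each statement's English description precedes it below -/
import Mathlib

section
/- Let D be an n×n Hermitian complex matrix. Then the matrix exponential of −D² is given by the Gaussian integral formula exp(−D²) = (4π)^(−1/2) ∫_ℝ e^(−k²/4) · exp(i·k·D) dk, where the integral is the Bochner integral of the matrix-valued function k ↦ e^(−k²/4)·exp(i k D). -/
open MeasureTheory

attribute [local instance] Matrix.normedAddCommGroup Matrix.normedSpace

/-! Diagonalise `D = U Λ U*`. Both sides commute with conjugation by the unitary `U`, so it
suffices to treat `Λ`, where the identity holds entrywise: it is the Fourier transform of a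
Gaussian, `∫ e^(-k²/4) e^(ikλ) dk = √(4π) e^(-λ²)`. -/

namespace Complex

lemma real_exp_neg_sq_div_four_smul_cexp (t : ℂ) (k : ℝ) :
    Real.exp (-k ^ 2 / 4) • cexp (I * k * t) = cexp (I * t * k) * cexp (-(1 / 4) * k ^ 2) := by
  rw [real_smul, ofReal_exp, ← exp_add, ← exp_add]
  push_cast
  ring_nf

lemma integrable_real_exp_neg_sq_div_four_smul_cexp (t : ℂ) :
    Integrable fun k : ℝ ↦ Real.exp (-k ^ 2 / 4) • cexp (I * k * t) := by
  refine (integrable_cexp_quadratic (b := 1 / 4) (by norm_num) (I * t) 0).congr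
    (ae_of_all _ fun k ↦ ?_)
  dsimp only
  rw [real_exp_neg_sq_div_four_smul_cexp, ← exp_add]
  ring_nf

theorem exp_neg_sq_eq_gaussian_integral (t : ℂ) :
    cexp (-t ^ 2) = ((4 * Real.pi) ^ (-(1 / 2 : ℝ))) •
      ∫ k : ℝ, Real.exp (-k ^ 2 / 4) • cexp (I * k * t) := by
  have hsqrt : (Real.pi / (1 / 4) : ℂ) ^ (1 / 2 : ℂ) = ((4 * Real.pi) ^ (1 / 2 : ℝ) : ℝ) := by
    rw [ofReal_cpow (by positivity)]
    push_cast
    ring_nf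
  simp_rw [real_exp_neg_sq_div_four_smul_cexp]
  rw [fourierIntegral_gaussian (b := 1 / 4) (by norm_num), hsqrt, ← real_smul, smul_smul,
    ← Real.rpow_add (by positivity)]
  norm_num

end Complex

namespace Matrix

open Complex Unitary

variable {m : Type*} [Fintype m] [DecidableEq m]

theorem integral_diagonal {X 𝕜 : Type*} [RCLike 𝕜] [MeasurableSpace X] {μ : Measure X}
    {f : X → m → 𝕜} (hf : ∀ i, Integrable (fun x ↦ f x i) μ) :
    ∫ x, diagonal (f x) ∂μ = diagonal (∫ x, f x ∂μ) :=
  (diagonalLinearMap m 𝕜 𝕜).toContinuousLinearMap.integral_comp_comm (Integrable.of_eval hf)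

theorem exp_neg_sq_diagonal_eq_gaussian_integral (v : m → ℂ) :
    NormedSpace.exp (-(diagonal v ^ 2)) = ((4 * Real.pi) ^ (-(1 / 2 : ℝ))) •
      ∫ k : ℝ, Real.exp (-k ^ 2 / 4) • NormedSpace.exp ((I * (k : ℂ)) • diagonal v) := by
  have hintegrand (k : ℝ) : Real.exp (-k ^ 2 / 4) • NormedSpace.exp ((I * (k : ℂ)) • diagonal v)
      = diagonal fun i ↦ Real.exp (-k ^ 2 / 4) • cexp (I * k * v i) := by
    rw [← diagonal_smul, exp_diagonal, Pi.exp_def, ← exp_eq_exp_ℂ, ← diagonal_smul]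
    rfl
  have hint (i : m) := integrable_real_exp_neg_sq_div_four_smul_cexp (v i)
  rw [integral_congr_ae (ae_of_all _ hintegrand), integral_diagonal hint, ← diagonal_smul,
    diagonal_pow, diagonal_neg, exp_diagonal]
  congr 1
  funext i
  rw [Pi.exp_def, Pi.smul_apply, eval_integral hint, ← exp_eq_exp_ℂ]
  exact Complex.exp_neg_sq_eq_gaussian_integral (v i)

theorem exp_conjStarAlgAut (u : unitary (Matrix m m ℂ)) (A : Matrix m m ℂ) :
    NormedSpace.exp (conjStarAlgAut ℂ _ u A) = conjStarAlgAut ℂ _ u (NormedSpace.exp A) :=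
  exp_units_conj (toUnits u) A

theorem exp_neg_sq_conjStarAlgAut_eq_gaussian_integral (u : unitary (Matrix m m ℂ))
    {A : Matrix m m ℂ}
    (hA : NormedSpace.exp (-(A ^ 2)) = ((4 * Real.pi) ^ (-(1 / 2 : ℝ))) •
      ∫ k : ℝ, Real.exp (-k ^ 2 / 4) • NormedSpace.exp ((I * (k : ℂ)) • A)) :
    NormedSpace.exp (-(conjStarAlgAut ℂ _ u A ^ 2)) = ((4 * Real.pi) ^ (-(1 / 2 : ℝ))) •
      ∫ k : ℝ, Real.exp (-k ^ 2 / 4) •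
        NormedSpace.exp ((I * (k : ℂ)) • conjStarAlgAut ℂ _ u A) := by
  let φ : Matrix m m ℂ ≃L[ℂ] Matrix m m ℂ :=
    (conjStarAlgAut ℂ _ u).toAlgEquiv.toLinearEquiv.toContinuousLinearEquiv
  have hφ (r : ℝ) (B : Matrix m m ℂ) : r • conjStarAlgAut ℂ _ u B = φ (r • B) :=
    (LinearMapClass.map_smul_of_tower φ r B).symm
  simp_rw [← map_pow, ← map_neg, ← map_smul, exp_conjStarAlgAut, hA, hφ]
  exact (LinearMapClass.map_smul_of_tower φ _ _).trans (congrArg _ (φ.integral_comp_comm _).symm)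

end Matrix

/-- Gaussian integral formula for the exponential of minus the square of a
Hermitian matrix: `exp(−D²) = (4π)^(−1/2) ∫ℝ e^(−k²/4) · exp(i k D) dk`. -/
theorem exp_neg_sq_eq_gaussian_integral {n : ℕ} (D : Matrix (Fin n) (Fin n) ℂ)
    (hD : D.IsHermitian) :
    NormedSpace.exp (-(D ^ 2)) =
      ((4 * Real.pi) ^ (-(1 / 2 : ℝ))) •
        ∫ k : ℝ, Real.exp (-k ^ 2 / 4) • NormedSpace.exp ((Complex.I * (k : ℂ)) • D) := by
  rw [hD.spectral_theorem]
  exact Matrix.exp_neg_sq_conjStarAlgAut_eq_gaussian_integral _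
    (Matrix.exp_neg_sq_diagonal_eq_gaussian_integral _)
end

section
/- Lie product formula with an affine first factor: let A₁, A₂, …, Aₙ be N×N complex matrices. Then the sequence M ↦ [(1 + A₁/M) · exp(A₂/M) · ⋯ · exp(Aₙ/M)]^M (M a positive natural number, 1 denoting the identity matrix, and the M-th power taken in the matrix ring) converges, as M → ∞, to exp(A₁ + A₂ + ⋯ + Aₙ). -/
/-!
Put `F t = (1 + t • A) * ∏ᵢ exp (t • Bᵢ)` and `G t = exp (t • S)` with `S = A + ∑ᵢ Bᵢ`. Both equal
`1` at `t = 0` with derivative `S` there, so `F (1/M) - G (1/M) = o(1/M)`, while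
`G (1/M) ^ M = exp S` exactly. The same first-order expansion bounds the norms of `F (1/M)` and
`G (1/M)` by `exp (K / M)` with `K = ‖S‖ + 1`, and telescoping `a ^ M - b ^ M` then gives
`‖F (1/M) ^ M - exp S‖ ≤ exp K * M * ‖F (1/M) - G (1/M)‖ → 0`.
-/

open Filter NormedSpace Topology Asymptotics

section NormedRing

variable {𝔸 : Type*} [SeminormedRing 𝔸]

theorem norm_pow_succ_sub_pow_succ_le {a b : 𝔸} {c : ℝ} (ha : ‖a‖ ≤ c) (hb : ‖b‖ ≤ c) (m : ℕ) :
    ‖a ^ (m + 1) - b ^ (m + 1)‖ ≤ (m + 1) * c ^ m * ‖a - b‖ := by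
  induction m with
  | zero => simp
  | succ m ih =>
    have hc : 0 ≤ c := (norm_nonneg a).trans ha
    have hpow : ‖a ^ (m + 1)‖ ≤ c ^ (m + 1) :=
      (norm_pow_le' a m.succ_pos).trans (pow_le_pow_left₀ (norm_nonneg a) ha _)
    calc ‖a ^ (m + 1 + 1) - b ^ (m + 1 + 1)‖
        = ‖a ^ (m + 1) * (a - b) + (a ^ (m + 1) - b ^ (m + 1)) * b‖ := by
          rw [pow_succ a (m + 1), pow_succ b (m + 1)]; noncomm_ring
      _ ≤ ‖a ^ (m + 1)‖ * ‖a - b‖ + ‖a ^ (m + 1) - b ^ (m + 1)‖ * ‖b‖ :=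
          (norm_add_le _ _).trans (add_le_add (norm_mul_le _ _) (norm_mul_le _ _))
      _ ≤ c ^ (m + 1) * ‖a - b‖ + (m + 1) * c ^ m * ‖a - b‖ * c := by gcongr
      _ = (↑(m + 1) + 1) * c ^ (m + 1) * ‖a - b‖ := by push_cast; ring

theorem norm_pow_sub_pow_le_exp_mul {a b : 𝔸} {K : ℝ} (hK : 0 ≤ K) (M : ℕ)
    (ha : ‖a‖ ≤ Real.exp (K / M)) (hb : ‖b‖ ≤ Real.exp (K / M)) :
    ‖a ^ M - b ^ M‖ ≤ Real.exp K * (M * ‖a - b‖) := by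
  cases M with
  | zero => simp
  | succ m =>
    have hc : Real.exp (K / ↑(m + 1)) ^ m ≤ Real.exp K :=
      calc Real.exp (K / ↑(m + 1)) ^ m ≤ Real.exp (K / ↑(m + 1)) ^ (m + 1) :=
            pow_le_pow_right₀ (Real.one_le_exp (by positivity)) m.le_succ
        _ = Real.exp K := by rw [← Real.exp_nat_mul]; field_simp
    calc ‖a ^ (m + 1) - b ^ (m + 1)‖ ≤ (m + 1) * Real.exp (K / ↑(m + 1)) ^ m * ‖a - b‖ :=
          norm_pow_succ_sub_pow_succ_le ha hb m
      _ ≤ (m + 1) * Real.exp K * ‖a - b‖ := by gcongr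
      _ = Real.exp K * (↑(m + 1) * ‖a - b‖) := by push_cast; ring

end NormedRing

section NormedAlgebra

variable {𝕂 𝔸 : Type*} [RCLike 𝕂] [NormedRing 𝔸] [NormedAlgebra 𝕂 𝔸]

theorem HasDerivAt.eventually_norm_inv_natCast_le_exp [NormOneClass 𝔸] {F : 𝕂 → 𝔸} {S : 𝔸}
    (hF : HasDerivAt F S 0) (hF0 : F 0 = 1) :
    ∀ᶠ M : ℕ in atTop, ‖F (M : 𝕂)⁻¹‖ ≤ Real.exp ((‖S‖ + 1) / M) := by
  have hlin : ∀ᶠ t in 𝓝 0, ‖F t - 1 - t • S‖ ≤ ‖t‖ := by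
    simpa [hF0] using (hasDerivAt_iff_isLittleO.mp hF).def one_pos
  filter_upwards [tendsto_inv_atTop_nhds_zero_nat.eventually hlin] with M hM
  set t : 𝕂 := (M : 𝕂)⁻¹
  have ht : ‖t‖ = (M : ℝ)⁻¹ := by simp [t]
  calc ‖F t‖ = ‖1 + t • S + (F t - 1 - t • S)‖ := by congr 1; abel
    _ ≤ ‖(1 : 𝔸)‖ + ‖t • S‖ + ‖F t - 1 - t • S‖ := norm_add₃_le
    _ ≤ (‖S‖ + 1) / M + 1 := by
      rw [norm_one, norm_smul, ht, div_eq_mul_inv]; rw [ht] at hM; linarith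
    _ ≤ Real.exp ((‖S‖ + 1) / M) := Real.add_one_le_exp _

theorem tendsto_natCast_mul_norm_sub_of_hasDerivAt {E : Type*} [NormedAddCommGroup E]
    [NormedSpace 𝕂 E] {F G : 𝕂 → E} {S : E} (hF : HasDerivAt F S 0) (hG : HasDerivAt G S 0)
    (h0 : F 0 = G 0) :
    Tendsto (fun M : ℕ => (M : ℝ) * ‖F (M : 𝕂)⁻¹ - G (M : 𝕂)⁻¹‖) atTop (𝓝 0) := by
  have hFG : (fun t => F t - G t) =o[𝓝 0] fun t => t := by
    have := (hasDerivAt_iff_isLittleO.mp hF).sub (hasDerivAt_iff_isLittleO.mp hG)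
    simp only [sub_zero, h0] at this
    exact this.congr_left fun t => by abel
  refine ((hFG.comp_tendsto tendsto_inv_atTop_nhds_zero_nat).norm_left.norm_right
    |>.tendsto_div_nhds_zero).congr fun M => ?_
  simp [div_eq_mul_inv, mul_comm]

variable [CompleteSpace 𝔸]

theorem hasDerivAt_list_prod_exp_smul (l : List 𝔸) :
    HasDerivAt (fun t : 𝕂 => (l.map fun x => exp (t • x)).prod) l.sum 0 := by
  induction l with
  | nil => simpa using hasDerivAt_const (0 : 𝕂) (1 : 𝔸)
  | cons x l ih => simpa using (hasDerivAt_exp_smul_const x (0 : 𝕂)).fun_mul ih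

theorem tendsto_pow_inv_natCast_of_hasDerivAt [NormOneClass 𝔸] {F : 𝕂 → 𝔸} {S : 𝔸}
    (hF : HasDerivAt F S 0) (hF0 : F 0 = 1) :
    Tendsto (fun M : ℕ => F (M : 𝕂)⁻¹ ^ M) atTop (𝓝 (exp S)) := by
  let : NormedAlgebra ℚ 𝔸 := NormedAlgebra.restrictScalars ℚ 𝕂 𝔸
  set G : 𝕂 → 𝔸 := fun t => exp (t • S)
  have hG : HasDerivAt G S 0 := by simpa using hasDerivAt_exp_smul_const S (0 : 𝕂)
  have hG0 : G 0 = 1 := by simp [G]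
  have hGpow (M : ℕ) (hM : M ≠ 0) : G (M : 𝕂)⁻¹ ^ M = exp S := by
    rw [← exp_nsmul, ← Nat.cast_smul_eq_nsmul 𝕂, smul_smul,
      mul_inv_cancel₀ (Nat.cast_ne_zero.2 hM), one_smul]
  rw [← tendsto_sub_nhds_zero_iff]
  have hsmall := (tendsto_natCast_mul_norm_sub_of_hasDerivAt hF hG (hF0.trans hG0.symm)).const_mul
    (Real.exp (‖S‖ + 1))
  rw [mul_zero] at hsmall
  refine squeeze_zero_norm' ?_ hsmall
  filter_upwards [hF.eventually_norm_inv_natCast_le_exp hF0,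
    hG.eventually_norm_inv_natCast_le_exp hG0, eventually_ne_atTop 0] with M hFM hGM hM
  rw [← hGpow M hM]
  exact norm_pow_sub_pow_le_exp_mul (by positivity) M hFM hGM

end NormedAlgebra

/-- Lie product formula with an affine first factor: for `N×N` complex matrices
`A₁` (written `A`) and `A₂, …, Aₙ` (written `B 0, …, B (n-1)`), the sequence
`M ↦ [(1 + A₁/M) · exp(A₂/M) ⋯ exp(Aₙ/M)]^M` converges to `exp(A₁ + A₂ + ⋯ + Aₙ)`
as `M → ∞`. -/
theorem lie_product_formula_affine_first_factor {N n : ℕ}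
    (A : Matrix (Fin N) (Fin N) ℂ) (B : Fin n → Matrix (Fin N) (Fin N) ℂ) :
    Tendsto
      (fun M : ℕ =>
        ((1 + ((M : ℂ))⁻¹ • A) *
            (List.ofFn fun i => NormedSpace.exp (((M : ℂ))⁻¹ • B i)).prod) ^ M)
      atTop (nhds (NormedSpace.exp (A + ∑ i, B i))) := by
  -- the `linfty` operator norm satisfies `‖1‖ = 1` only for a nonempty index type
  rcases isEmpty_or_nonempty (Fin N) with _ | _
  · exact tendsto_const_nhds.congr fun _ => Subsingleton.elim _ _
  let : NormedRing (Matrix (Fin N) (Fin N) ℂ) := Matrix.linftyOpNormedRing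
  let : NormedAlgebra ℂ (Matrix (Fin N) (Fin N) ℂ) := Matrix.linftyOpNormedAlgebra
  have hprod := hasDerivAt_list_prod_exp_smul (𝕂 := ℂ) (List.ofFn B)
  simp only [List.map_ofFn, Function.comp_def, List.sum_ofFn] at hprod
  refine tendsto_pow_inv_natCast_of_hasDerivAt
    (F := fun t : ℂ => (1 + t • A) * (List.ofFn fun i => exp (t • B i)).prod) ?_ (by simp)
  have hF := (((hasDerivAt_id (0 : ℂ)).smul_const A).const_add 1).fun_mul hprod
  simp only [id, zero_smul, exp_zero, List.ofFn_const, List.prod_replicate, one_pow, mul_one,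
    add_zero, one_mul, one_smul] at hF
  exact hF
end

section
/- Quarter rotation: let A be a complex unital Banach algebra and let a, b, c ∈ A satisfy c·a − a·c = 2i·b and b·c − c·b = 2i·a. Then exp(−(i π/4)·c) · a · exp((i π/4)·c) = b and exp(−(i π/4)·c) · b · exp((i π/4)·c) = −a. -/
/-!
If `c * x - x * c = μ • x`, then `x` intertwines `c + μ` and `c`, so conjugating `x` by
`exp (t • c)` multiplies it by `exp (-t μ)`. The hypotheses say that `a + i b` and `a - i b` are
such eigenvectors of `[c, ·]`, with eigenvalues `2` and `-2`; for `t = iπ/4` they are therefore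
multiplied by `-i` and `i`, which on `a = ((a + i b) + (a - i b)) / 2` and
`b = i ((a - i b) - (a + i b)) / 2` is the rotation `a ↦ b ↦ -a`.
-/

open NormedSpace

section

variable {𝕜 A : Type*} [RCLike 𝕜] [NormedRing A] [NormedAlgebra 𝕜 A] [CompleteSpace A]

theorem exp_neg_mul_mul_exp_of_commutator_eq_smul {c x : A} {μ : 𝕜}
    (h : c * x - x * c = μ • x) : exp (-c) * x * exp c = exp (-μ) • x := by
  let +nondep : NormedAlgebra ℚ A := .restrictScalars ℚ 𝕜 A
  have hsemi : SemiconjBy x (c + algebraMap 𝕜 A μ) c := by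
    rw [SemiconjBy, mul_add, ← Algebra.commutes, ← Algebra.smul_def, ← h]
    abel
  have key : exp μ • (exp (-c) * x * exp c) = x := by
    have := hsemi.exp_neg_mul_mul_exp_eq_self
    rwa [exp_add_of_commute (Algebra.commutes μ c).symm, ← algebraMap_exp_comm, ← mul_assoc,
      ← Algebra.commutes, ← Algebra.smul_def] at this
  calc exp (-c) * x * exp c = (exp (-μ) * exp μ) • (exp (-c) * x * exp c) := by
        rw [← exp_add_of_commute (Commute.all _ _), neg_add_cancel, exp_zero, one_smul]
    _ = exp (-μ) • x := by rw [mul_smul, key]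

theorem exp_neg_smul_mul_mul_exp_smul_of_commutator_eq_smul {c x : A} {μ : 𝕜} (t : 𝕜)
    (h : c * x - x * c = μ • x) : exp ((-t) • c) * x * exp (t • c) = exp (-(t * μ)) • x := by
  rw [neg_smul]
  refine exp_neg_mul_mul_exp_of_commutator_eq_smul ?_
  rw [smul_mul_assoc, mul_smul_comm, ← smul_sub, h, smul_smul]

end

open Complex Real

theorem LinearMap.apply_eq_and_eq_neg_of_apply_add_sub_I_smul {M : Type*} [AddCommGroup M]
    [Module ℂ M] (φ : M →ₗ[ℂ] M) {a b : M}
    (hadd : φ (a + I • b) = -I • (a + I • b)) (hsub : φ (a - I • b) = I • (a - I • b)) :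
    φ a = b ∧ φ b = -a := by
  have ha : a = (1 / 2 : ℂ) • (a + I • b) + (1 / 2 : ℂ) • (a - I • b) := by module
  have hb : b = (-I / 2) • (a + I • b) + (I / 2) • (a - I • b) := by
    match_scalars <;> grind [I_sq]
  constructor
  · rw [ha, map_add, map_smul, map_smul, hadd, hsub]
    match_scalars <;> grind [I_sq]
  · rw [hb, map_add, map_smul, map_smul, hadd, hsub]
    match_scalars <;> grind [I_sq]

/-- Quarter rotation in a complex unital Banach algebra: if
`c·a − a·c = 2i·b` and `b·c − c·b = 2i·a`, then
`exp(−(iπ/4)·c) · a · exp((iπ/4)·c) = b` and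
`exp(−(iπ/4)·c) · b · exp((iπ/4)·c) = −a`. -/
theorem quarter_rotation {A : Type*} [NormedRing A] [NormedAlgebra ℂ A]
    [CompleteSpace A] (a b c : A)
    (h1 : c * a - a * c = (2 * Complex.I) • b)
    (h2 : b * c - c * b = (2 * Complex.I) • a) :
    NormedSpace.exp ((-(Complex.I * (Real.pi : ℂ) / 4)) • c) * a *
        NormedSpace.exp ((Complex.I * (Real.pi : ℂ) / 4) • c) = b ∧
    NormedSpace.exp ((-(Complex.I * (Real.pi : ℂ) / 4)) • c) * b *
        NormedSpace.exp ((Complex.I * (Real.pi : ℂ) / 4) • c) = -a := by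
  have hadd : c * (a + I • b) - (a + I • b) * c = (2 : ℂ) • (a + I • b) := by
    rw [mul_add, add_mul, mul_smul_comm, smul_mul_assoc]
    linear_combination (norm := match_scalars <;> grind [I_sq]) h1 - I • h2
  have hsub : c * (a - I • b) - (a - I • b) * c = (-2 : ℂ) • (a - I • b) := by
    rw [mul_sub, sub_mul, mul_smul_comm, smul_mul_assoc]
    linear_combination (norm := match_scalars <;> grind [I_sq]) h1 + I • h2
  refine (LinearMap.mulLeftRight ℂ (A := A) (exp ((-(I * π / 4)) • c), exp ((I * π / 4) • c))
    |>.apply_eq_and_eq_neg_of_apply_add_sub_I_smul ?_ ?_)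
  · rw [LinearMap.mulLeftRight_apply, exp_neg_smul_mul_mul_exp_smul_of_commutator_eq_smul _ hadd,
      ← exp_eq_exp_ℂ, show -(I * π / 4 * 2) = -π / 2 * I by ring, exp_neg_pi_div_two_mul_I]
  · rw [LinearMap.mulLeftRight_apply, exp_neg_smul_mul_mul_exp_smul_of_commutator_eq_smul _ hsub,
      ← exp_eq_exp_ℂ, show -(I * π / 4 * -2) = π / 2 * I by ring, exp_pi_div_two_mul_I]
end

section
/- Pointwise convexity bound for the infrared integrand: let d ≥ 3 be an integer and p ∈ ℝ^d. Define Y(p) = −(1/d)·Σ_{m=1}^{d} cos p^{(m)} and, for each 3-element subset {i,j,k} of {1,…,d}, Y_{ijk}(p) = −(1/3)·(cos p^{(i)} + cos p^{(j)} + cos p^{(k)}). Let F(s) = s²/(1−s). Assume that max(Y_{ijk}(p), 0) < 1 for every 3-element subset {i,j,k}. Then F( max(Y(p),0) ) ≤ (1/C(d,3)) · Σ_{{i,j,k}} F( max(Y_{ijk}(p),0) ), where the sum runs over all 3-element subsets of {1,…,d} and C(d,3) = d(d−1)(d−2)/6 is their number. -/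
/-!
Averaging the triple means `Y_s` over all triples gives back `Y`, because every coordinate lies in
`C(d-1,2)` triples and `3 · C(d,3) = d · C(d-1,2)`. The bound is therefore Jensen's inequality for
`y ↦ F(max(y,0))`, which is convex on `(-∞,1)`: `F(s) = (1-s)⁻¹ - (1+s)` is convex there and
increasing on `[0,1)`, and `max(·,0)` is convex.
-/

noncomputable def irF (s : ℝ) : ℝ := s ^ 2 / (1 - s)

open Set

lemma irF_eq_inv_sub {s : ℝ} (hs : s ≠ 1) : irF s = (1 - s)⁻¹ - (1 + s) := by
  have : 1 - s ≠ 0 := sub_ne_zero.2 hs.symm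
  rw [irF]; field_simp; ring

lemma convexOn_inv_one_sub : ConvexOn ℝ (Iio 1) fun s : ℝ => (1 - s)⁻¹ := by
  have h := (convexOn_zpow (𝕜 := ℝ) (-1)).comp_affineMap
    (AffineMap.const ℝ ℝ (1 : ℝ) - AffineMap.id ℝ ℝ)
  rw [show (AffineMap.const ℝ ℝ (1 : ℝ) - AffineMap.id ℝ ℝ) ⁻¹' Ioi 0 = Iio 1 by ext; simp] at h
  exact h.congr fun s _ => by simp

lemma convexOn_irF : ConvexOn ℝ (Iio 1) irF :=
  (convexOn_inv_one_sub.sub ((concaveOn_const 1 (convex_Iio 1)).add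
    (concaveOn_id (convex_Iio 1)))).congr fun _ hs => (irF_eq_inv_sub hs.ne).symm

lemma monotoneOn_irF : MonotoneOn irF (Ico 0 1) := by
  rintro x ⟨hx0, hx1⟩ y ⟨-, hy1⟩ hxy
  exact div_le_div₀ (by positivity) (pow_le_pow_left₀ hx0 hxy 2) (by linarith) (by linarith)

lemma image_max_zero_Iio : (fun y : ℝ => max y 0) '' Iio 1 = Ico 0 1 := by
  ext x
  constructor
  · rintro ⟨y, hy, rfl⟩
    exact ⟨le_max_right _ _, max_lt hy one_pos⟩
  · rintro ⟨hx0, hx1⟩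
    exact ⟨x, hx1, max_eq_left hx0⟩

lemma convexOn_irF_max_zero : ConvexOn ℝ (Iio 1) fun y => irF (max y 0) := by
  refine ConvexOn.comp (g := irF) (f := fun y : ℝ => max y 0) ?_ ?_ ?_
  · rw [image_max_zero_Iio]
    exact convexOn_irF.subset Ico_subset_Iio_self (convex_Ico 0 1)
  · exact (convexOn_id (convex_Iio 1)).sup (convexOn_const 0 (convex_Iio 1))
  · rw [image_max_zero_Iio]; exact monotoneOn_irF

lemma card_filter_mem_powersetCard {α : Type*} [DecidableEq α] {t : Finset α} {a : α}
    (ha : a ∈ t) {k : ℕ} (hk : 1 ≤ k) :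
    (t.powersetCard k |>.filter (a ∈ ·)).card = (t.card - 1).choose (k - 1) := by
  simpa using Finset.card_filter_powersetCard_subset {a} t k
    (Finset.singleton_subset_iff.2 ha) (by simpa using hk)

lemma sum_powersetCard_sum {α M : Type*} [DecidableEq α] [AddCommMonoid M] {t : Finset α} {k : ℕ}
    (hk : 1 ≤ k) (f : α → M) :
    ∑ s ∈ t.powersetCard k, ∑ i ∈ s, f i = (t.card - 1).choose (k - 1) • ∑ i ∈ t, f i := by
  rw [Finset.sum_comm' (t' := t) (s' := fun i => (t.powersetCard k).filter (i ∈ ·))]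
  · rw [Finset.smul_sum]
    refine Finset.sum_congr rfl fun i hi => ?_
    rw [Finset.sum_const, card_filter_mem_powersetCard hi hk]
  · intro s i
    simp only [Finset.mem_filter, Finset.mem_powersetCard]
    exact ⟨fun h => ⟨⟨h.1, h.2⟩, h.1.1 h.2⟩, fun h => ⟨h.1.1, h.1.2⟩⟩

lemma mean_powersetCard_mean {α : Type*} [DecidableEq α] {t : Finset α} {k : ℕ}
    (hk : 1 ≤ k) (hkt : k ≤ t.card) (f : α → ℝ) :
    ∑ s ∈ t.powersetCard k, (1 / (t.card.choose k : ℝ)) * (1 / k * ∑ i ∈ s, f i) =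
      1 / t.card * ∑ i ∈ t, f i := by
  obtain ⟨n, hn⟩ : ∃ n, t.card = n + 1 := ⟨t.card - 1, by omega⟩
  obtain ⟨j, rfl⟩ : ∃ j, k = j + 1 := ⟨k - 1, by omega⟩
  have hchoose : ((n + 1 : ℕ) : ℝ) * n.choose j = (n + 1).choose (j + 1) * (j + 1 : ℕ) := by
    exact_mod_cast Nat.add_one_mul_choose_eq n j
  have hpos : (0 : ℝ) < (n + 1).choose (j + 1) := by
    exact_mod_cast Nat.choose_pos (by omega)
  rw [← Finset.mul_sum, ← Finset.mul_sum, sum_powersetCard_sum hk, nsmul_eq_mul, hn,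
    Nat.add_sub_cancel, Nat.add_sub_cancel]
  field_simp
  linear_combination (∑ i ∈ t, f i) * hchoose

/-- Pointwise convexity bound for the infrared integrand: with
`Y(p) = −(1/d)·Σ_{m} cos p^{(m)}` and, for each 3-element subset `s` of the
coordinates, `Y_s(p) = −(1/3)·Σ_{i∈s} cos p^{(i)}`, if `max(Y_s(p),0) < 1` for
every such `s`, then
`F(max(Y(p),0)) ≤ (1/C(d,3)) · Σ_s F(max(Y_s(p),0))`. -/
theorem infrared_pointwise_convexity_bound {d : ℕ} (hd : 3 ≤ d) (p : Fin d → ℝ)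
    (h : ∀ s ∈ Finset.powersetCard 3 (Finset.univ : Finset (Fin d)),
      max (-(1 / 3 : ℝ) * ∑ i ∈ s, Real.cos (p i)) 0 < 1) :
    irF (max (-(1 / (d : ℝ)) * ∑ m, Real.cos (p m)) 0) ≤
      (1 / (d.choose 3 : ℝ)) *
        ∑ s ∈ Finset.powersetCard 3 (Finset.univ : Finset (Fin d)),
          irF (max (-(1 / 3 : ℝ) * ∑ i ∈ s, Real.cos (p i)) 0) := by
  have hcard : (Finset.univ : Finset (Fin d)).card = d := Finset.card_fin d
  have hweights : ∑ _s ∈ Finset.powersetCard 3 (Finset.univ : Finset (Fin d)),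
      (1 / (d.choose 3 : ℝ)) = 1 := by
    have : (0 : ℝ) < d.choose 3 := by exact_mod_cast Nat.choose_pos hd
    rw [Finset.sum_const, Finset.card_powersetCard, hcard, nsmul_eq_mul]
    field_simp
  have hjensen := convexOn_irF_max_zero.map_sum_le (fun _ _ => by positivity) hweights
    fun s hs => (le_max_left _ _).trans_lt (h s hs)
  have hmean : ∑ s ∈ Finset.powersetCard 3 (Finset.univ : Finset (Fin d)),
      (1 / (d.choose 3 : ℝ)) • (-(1 / 3 : ℝ) * ∑ i ∈ s, Real.cos (p i)) =
        -(1 / (d : ℝ)) * ∑ m, Real.cos (p m) := by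
    simpa [hcard, Finset.sum_neg_distrib, Nat.cast_ofNat] using
      mean_powersetCard_mean (t := Finset.univ) (k := 3) (by norm_num) (hcard.symm ▸ hd)
        fun i => -Real.cos (p i)
  rw [hmean] at hjensen
  simpa only [smul_eq_mul, Finset.mul_sum] using hjensen
end

section
/- Spectral splitting inequality: let H be an n×n positive semidefinite Hermitian complex matrix, let φ ∈ ℂⁿ, let ε ∈ (0,2], and let E' > 0. Then ⟨φ, H^{1+ε} φ⟩ ≤ (E')^{ε} · ⟨φ, H φ⟩ + (E')^{ε−2} · ⟨φ, H³ φ⟩, where H^{1+ε} is the (1+ε)-th power of H defined by the functional calculus (equivalently, by diagonalization), and ⟨·,·⟩ is the standard inner product on ℂⁿ. -/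
open Matrix
open scoped ComplexOrder MatrixOrder

/-!
The scalar inequality `x ^ (1 + ε) ≤ E ^ ε * x + E ^ (ε - 2) * x ^ 3` holds for every
`x ≥ 0`: the first term dominates when `x ≤ E`, the second when `x ≥ E`. Applied on the
spectrum of the positive semidefinite `H`, monotonicity of the continuous functional calculus
turns it into the Loewner-order inequality `H ^ (1 + ε) ≤ E ^ ε • H + E ^ (ε - 2) • H ^ 3`,
which is then tested against `φ`.
-/

theorem Real.rpow_one_add_le_mul_add_mul_pow_three {x ε E : ℝ} (hx : 0 ≤ x) (hε0 : 0 ≤ ε)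
    (hε2 : ε ≤ 2) (hE : 0 < E) :
    x ^ (1 + ε) ≤ E ^ ε * x + E ^ (ε - 2) * x ^ 3 := by
  rcases le_total x E with hxE | hEx
  · have hlow : x ^ (1 + ε) ≤ E ^ ε * x := by
      rw [Real.rpow_one_add' hx (by positivity), mul_comm]
      exact mul_le_mul_of_nonneg_right (Real.rpow_le_rpow hx hxE hε0) hx
    have : 0 ≤ E ^ (ε - 2) * x ^ 3 := by positivity
    linarith
  · have hhigh : x ^ (1 + ε) ≤ E ^ (ε - 2) * x ^ 3 := by
      have hx0 : 0 < x := hE.trans_le hEx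
      rw [show 1 + ε = (ε - 2) + 3 by ring, Real.rpow_add hx0, Real.rpow_ofNat]
      exact mul_le_mul_of_nonneg_right (Real.rpow_le_rpow_of_nonpos hE hEx (by linarith))
        (by positivity)
    have : 0 ≤ E ^ ε * x := by positivity
    linarith

theorem Matrix.re_dotProduct_mulVec_le_of_le {n 𝕜 : Type*} [Fintype n] [RCLike 𝕜]
    {A B : Matrix n n 𝕜} (hAB : A ≤ B) (x : n → 𝕜) :
    RCLike.re (star x ⬝ᵥ A *ᵥ x) ≤ RCLike.re (star x ⬝ᵥ B *ᵥ x) := by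
  have := (Matrix.le_iff.mp hAB).re_dotProduct_nonneg x
  rw [sub_mulVec, dotProduct_sub, map_sub] at this
  linarith

theorem cfc_rpow_one_add_le_smul_add_smul_pow_three {A : Type*} [Ring A] [StarRing A]
    [TopologicalSpace A] [Algebra ℝ A] [PartialOrder A] [StarOrderedRing A]
    [ContinuousFunctionalCalculus ℝ A IsSelfAdjoint] [NonnegSpectrumClass ℝ A] {a : A}
    (ha : 0 ≤ a) {ε E : ℝ} (hε0 : 0 ≤ ε) (hε2 : ε ≤ 2) (hE : 0 < E) :
    cfc (fun x : ℝ => x ^ (1 + ε)) a ≤ E ^ ε • a + E ^ (ε - 2) • a ^ 3 := by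
  calc cfc (fun x : ℝ => x ^ (1 + ε)) a
      ≤ cfc (fun x : ℝ => E ^ ε * x + E ^ (ε - 2) * x ^ 3) a :=
        cfc_mono (hf := (Real.continuous_rpow_const (by positivity)).continuousOn)
          fun x hx => Real.rpow_one_add_le_mul_add_mul_pow_three
          (spectrum_nonneg_of_nonneg ha hx) hε0 hε2 hE
    _ = E ^ ε • a + E ^ (ε - 2) • a ^ 3 := by
        rw [cfc_add .., cfc_const_mul .., cfc_const_mul .., cfc_pow .., cfc_id' ..]

/-- Spectral splitting inequality: for a positive semidefinite Hermitian matrix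
`H`, a vector `φ`, `ε ∈ (0,2]` and `E' > 0`,
`⟨φ, H^{1+ε} φ⟩ ≤ (E')^ε ⟨φ, H φ⟩ + (E')^{ε−2} ⟨φ, H³ φ⟩`, where `H^{1+ε}` is
defined by the functional calculus for the Hermitian matrix `H`. -/
theorem spectral_splitting_inequality {n : ℕ} {H : Matrix (Fin n) (Fin n) ℂ}
    (hH : H.PosSemidef) (φ : Fin n → ℂ) {ε : ℝ} (hε0 : 0 < ε) (hε2 : ε ≤ 2)
    {E' : ℝ} (hE' : 0 < E') :
    (star φ ⬝ᵥ ((hH.1.cfc fun x : ℝ => x ^ (1 + ε)).mulVec φ)).re ≤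
      E' ^ ε * (star φ ⬝ᵥ H.mulVec φ).re +
        E' ^ (ε - 2) * (star φ ⬝ᵥ (H ^ 3).mulVec φ).re := by
  rw [← hH.1.cfc_eq]
  calc _ ≤ (star φ ⬝ᵥ (E' ^ ε • H + E' ^ (ε - 2) • H ^ 3) *ᵥ φ).re :=
        re_dotProduct_mulVec_le_of_le
          (cfc_rpow_one_add_le_smul_add_smul_pow_three (nonneg_iff_posSemidef.mpr hH)
            hε0.le hε2 hE') φ
    _ = _ := by
        simp only [add_mulVec, smul_mulVec, dotProduct_add, dotProduct_smul, Complex.add_re,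
          Complex.real_smul, Complex.re_ofReal_mul]
end
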